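/- If there is a derivation (direct or indirect) of θ from Θ using rules X, where θ and all members of Θ use only atoms from a nonempty set P', then there is such a derivation involving only atoms of P'. Moreover, if there is a derivation of an absurdity from Θ, there is a derivation from Θ of an absurdity that uses only atoms of P'. -/

import Mathlib

/-- Literals over a set of atoms `P`: an atom or a negated atom. -/
inductive Lit (P : Type) : Type
  | pos (p : P)
  | neg (p : P)
deriving DecidableEq

/-- Formulas of the (extended) numerical syllogistic: `∃_{≤ i}(ℓ,m)` and `∃_{> i}(ℓ,m)`. -/
inductive Fm (P : Type) : Type
  | le (i : ℕ) (l m : Lit P)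
  | gt (i : ℕ) (l m : Lit P)
deriving DecidableEq

/-- Interpretation of a literal in a structure with domain `A` given by `I`. -/
def Lit.interp {P A : Type} (I : P → Set A) : Lit P → Set A
  | .pos p => I p
  | .neg p => (I p)ᶜ

/-- Truth of a formula in a structure: cardinality constraints on `ℓ^𝔄 ∩ m^𝔄`. -/
def Fm.sat {P A : Type} (I : P → Set A) : Fm P → Prop
  | .le i l m => Cardinal.mk ↥(l.interp I ∩ m.interp I) ≤ (i : Cardinal)
  | .gt i l m => (i : Cardinal) < Cardinal.mk ↥(l.interp I ∩ m.interp I)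

/-- Semantic entailment: every structure (nonempty domain) satisfying `Θ` satisfies `ψ`. -/
def Entails {P : Type} (Θ : Set (Fm P)) (ψ : Fm P) : Prop :=
  ∀ (A : Type) (_ : Nonempty A) (I : P → Set A), (∀ φ ∈ Θ, φ.sat I) → ψ.sat I

/-- The negation map, swapping `∃_{≤ i}` and `∃_{> i}`. -/
def Fm.negate {P : Type} : Fm P → Fm P
  | .le i l m => .gt i l m
  | .gt i l m => .le i l m

/-- Swap the (unordered) arguments of a formula. -/
def Fm.swap {P : Type} : Fm P → Fm P
  | .le i l m => .le i m l
  | .gt i l m => .gt i m l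

/-- The numerical index of a formula. -/
def Fm.idx {P : Type} : Fm P → ℕ
  | .le i _ _ => i
  | .gt i _ _ => i

/-- The atom of a literal. -/
def Lit.atom {P : Type} : Lit P → P
  | .pos p => p
  | .neg p => p

/-- The two (unordered) literal arguments of a formula. -/
def Fm.args {P : Type} : Fm P → Lit P × Lit P
  | .le _ l m => (l, m)
  | .gt _ l m => (l, m)

/-- All atoms of a formula lie in `S`. -/
def Fm.atomsIn {P : Type} (S : Set P) (φ : Fm P) : Prop :=
  φ.args.1.atom ∈ S ∧ φ.args.2.atom ∈ S

/-- Applying a substitution to a literal. -/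
def Lit.map {P : Type} (g : P → P) : Lit P → Lit P
  | .pos p => .pos (g p)
  | .neg p => .neg (g p)

/-- Applying a substitution to a formula. -/
def Fm.map {P : Type} (g : P → P) : Fm P → Fm P
  | .le i l m => .le i (l.map g) (m.map g)
  | .gt i l m => .gt i (l.map g) (m.map g)

/-- A syllogistic rule: a finite set of antecedents and a consequent. -/
structure Rule (P : Type) where
  ants : Finset (Fm P)
  con : Fm P

/-- The direct syllogistic derivation relation `⊢_X`. -/
inductive Derives {P : Type} (X : Set (Rule P)) : Set (Fm P) → Fm P → Prop
  | prem {Θ : Set (Fm P)} {θ : Fm P} : θ ∈ Θ → Derives X Θ θ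
  | rule {Θ : Set (Fm P)} (r : Rule P) (g : P → P) : r ∈ X →
      (∀ ψ ∈ r.ants, Derives X Θ (ψ.map g)) → Derives X Θ (r.con.map g)

/-- The indirect syllogistic derivation relation `⊩_X` (with reductio ad absurdum). -/
inductive IndDerives {P : Type} (X : Set (Rule P)) : Set (Fm P) → Fm P → Prop
  | prem {Θ : Set (Fm P)} {θ : Fm P} : θ ∈ Θ → IndDerives X Θ θ
  | rule {Θ : Set (Fm P)} (r : Rule P) (g : P → P) : r ∈ X →
      (∀ ψ ∈ r.ants, IndDerives X Θ (ψ.map g)) → IndDerives X Θ (r.con.map g)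
  | raa {Θ : Set (Fm P)} {θ : Fm P} (i : ℕ) (p : P) :
      IndDerives X (insert θ Θ) (Fm.gt i (Lit.pos p) (Lit.neg p)) →
      IndDerives X Θ θ.negate
/-- The direct derivation relation restricted so that every formula appearing in the
derivation uses only atoms in `S`. -/
inductive DerivesIn {P : Type} (X : Set (Rule P)) (S : Set P) : Set (Fm P) → Fm P → Prop
  | prem {Θ : Set (Fm P)} {θ : Fm P} : θ ∈ Θ → θ.atomsIn S → DerivesIn X S Θ θ
  | rule {Θ : Set (Fm P)} (r : Rule P) (g : P → P) : r ∈ X →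
      (∀ ψ ∈ r.ants, (ψ.map g).atomsIn S) → (∀ ψ ∈ r.ants, DerivesIn X S Θ (ψ.map g)) →
      (r.con.map g).atomsIn S → DerivesIn X S Θ (r.con.map g)

/-- The indirect derivation relation restricted so that every formula appearing in the
derivation uses only atoms in `S`. -/
inductive IndDerivesIn {P : Type} (X : Set (Rule P)) (S : Set P) : Set (Fm P) → Fm P → Prop
  | prem {Θ : Set (Fm P)} {θ : Fm P} : θ ∈ Θ → θ.atomsIn S → IndDerivesIn X S Θ θ
  | rule {Θ : Set (Fm P)} (r : Rule P) (g : P → P) : r ∈ X →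
      (∀ ψ ∈ r.ants, (ψ.map g).atomsIn S) → (∀ ψ ∈ r.ants, IndDerivesIn X S Θ (ψ.map g)) →
      (r.con.map g).atomsIn S → IndDerivesIn X S Θ (r.con.map g)
  | raa {Θ : Set (Fm P)} {θ : Fm P} (i : ℕ) (p : P) : p ∈ S → θ.atomsIn S →
      IndDerivesIn X S (insert θ Θ) (Fm.gt i (Lit.pos p) (Lit.neg p)) →
      IndDerivesIn X S Θ θ.negate

/-!
Fix `p₀ ∈ P'` and the retraction `g` of `P` onto `P'` sending every atom outside `P'` to `p₀`.
Applying `g` to every formula of a derivation again gives a derivation, since rule instances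
are closed under substitution and `g` maps absurdities to absurdities; all its atoms now lie
in `P'`. As `g` fixes every formula over `P'`, premises and conclusion in `L(P')` are unchanged.
-/

namespace Lit

variable {P : Type}

lemma atom_map (g : P → P) (l : Lit P) : (l.map g).atom = g l.atom := by
  cases l <;> rfl

lemma map_map (g g' : P → P) (l : Lit P) : (l.map g').map g = l.map (g ∘ g') := by
  cases l <;> rfl

lemma map_eq_self {S : Set P} {g : P → P} (hg : ∀ p ∈ S, g p = p) {l : Lit P}
    (hl : l.atom ∈ S) : l.map g = l := by
  cases l <;> simp_all [Lit.map, Lit.atom]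

end Lit

namespace Fm

variable {P : Type}

lemma atomsIn_map {S : Set P} {g : P → P} (hg : ∀ p, g p ∈ S) (φ : Fm P) :
    (φ.map g).atomsIn S := by
  cases φ <;> exact ⟨by simp only [Fm.map, Fm.args, Lit.atom_map, hg],
    by simp only [Fm.map, Fm.args, Lit.atom_map, hg]⟩

lemma map_map (g g' : P → P) (φ : Fm P) : (φ.map g').map g = φ.map (g ∘ g') := by
  cases φ <;> simp only [Fm.map, Lit.map_map]

lemma negate_map (g : P → P) (φ : Fm P) : (φ.map g).negate = φ.negate.map g := by
  cases φ <;> rfl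

lemma map_eq_self {S : Set P} {g : P → P} (hg : ∀ p ∈ S, g p = p) {φ : Fm P}
    (hφ : φ.atomsIn S) : φ.map g = φ := by
  obtain ⟨hl, hm⟩ := hφ
  cases φ <;> simp_all [Fm.map, Fm.args, Lit.map_eq_self hg]

lemma image_map_eq_self {S : Set P} {g : P → P} (hg : ∀ p ∈ S, g p = p) {Θ : Set (Fm P)}
    (hΘ : ∀ φ ∈ Θ, φ.atomsIn S) : Fm.map g '' Θ = Θ := by
  conv_rhs => rw [← Set.image_id Θ]
  exact Set.image_congr fun φ hφ => map_eq_self hg (hΘ φ hφ)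

end Fm

section Relabel

variable {P : Type} {X : Set (Rule P)} {S : Set P} {g : P → P} {Θ : Set (Fm P)} {θ : Fm P}

lemma Derives.derivesIn_map (hg : ∀ p, g p ∈ S) (h : Derives X Θ θ) :
    DerivesIn X S (Fm.map g '' Θ) (θ.map g) := by
  induction h with
  | prem hθ => exact .prem (Set.mem_image_of_mem _ hθ) (Fm.atomsIn_map hg _)
  | rule r g' hr _ ih =>
    rw [Fm.map_map]
    have hgg' : ∀ p, (g ∘ g') p ∈ S := fun p => hg (g' p)
    refine .rule r (g ∘ g') hr (fun ψ _ => Fm.atomsIn_map hgg' _) (fun ψ hψ => ?_)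
      (Fm.atomsIn_map hgg' _)
    rw [← Fm.map_map]
    exact ih ψ hψ

lemma IndDerives.indDerivesIn_map (hg : ∀ p, g p ∈ S) (h : IndDerives X Θ θ) :
    IndDerivesIn X S (Fm.map g '' Θ) (θ.map g) := by
  induction h with
  | prem hθ => exact .prem (Set.mem_image_of_mem _ hθ) (Fm.atomsIn_map hg _)
  | rule r g' hr _ ih =>
    rw [Fm.map_map]
    have hgg' : ∀ p, (g ∘ g') p ∈ S := fun p => hg (g' p)
    refine .rule r (g ∘ g') hr (fun ψ _ => Fm.atomsIn_map hgg' _) (fun ψ hψ => ?_)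
      (Fm.atomsIn_map hgg' _)
    rw [← Fm.map_map]
    exact ih ψ hψ
  | raa i p _ ih =>
    rw [Set.image_insert_eq] at ih
    rw [← Fm.negate_map]
    exact .raa i (g p) (hg p) (Fm.atomsIn_map hg _) ih

end Relabel

lemma Set.Nonempty.exists_retraction {P : Type} {S : Set P} (hS : S.Nonempty) :
    ∃ g : P → P, (∀ p, g p ∈ S) ∧ ∀ p ∈ S, g p = p := by
  classical
  obtain ⟨p₀, hp₀⟩ := hS
  refine ⟨fun p => if p ∈ S then p else p₀, fun p => ?_, fun p hp => if_pos hp⟩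
  dsimp only
  split_ifs with hp
  exacts [hp, hp₀]

/-- derivations (direct or indirect) of conclusions in `L(P')` from
premises in `L(P')` can be carried out entirely within the atoms of `P'`; likewise,
derivations of absurdities can be relabelled to absurdities over `P'`. -/
theorem derivation_relabelling (P : Type) (X : Set (Rule P)) (P' : Set P)
    (hP' : P'.Nonempty) (Θ : Set (Fm P)) (hΘ : ∀ φ ∈ Θ, φ.atomsIn P') :
    (∀ θ : Fm P, θ.atomsIn P' → Derives X Θ θ → DerivesIn X P' Θ θ) ∧
    (∀ θ : Fm P, θ.atomsIn P' → IndDerives X Θ θ → IndDerivesIn X P' Θ θ) ∧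
    ((∃ (i : ℕ) (p : P), Derives X Θ (Fm.gt i (Lit.pos p) (Lit.neg p))) →
      ∃ (i : ℕ) (p : P), p ∈ P' ∧ DerivesIn X P' Θ (Fm.gt i (Lit.pos p) (Lit.neg p))) ∧
    ((∃ (i : ℕ) (p : P), IndDerives X Θ (Fm.gt i (Lit.pos p) (Lit.neg p))) →
      ∃ (i : ℕ) (p : P), p ∈ P' ∧ IndDerivesIn X P' Θ (Fm.gt i (Lit.pos p) (Lit.neg p))) := by
  obtain ⟨g, hgP', hg_fix⟩ := hP'.exists_retraction
  have hΘg : Fm.map g '' Θ = Θ := Fm.image_map_eq_self hg_fix hΘ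
  refine ⟨fun θ hθ h => ?_, fun θ hθ h => ?_, fun ⟨i, p, h⟩ => ?_, fun ⟨i, p, h⟩ => ?_⟩
  · simpa only [hΘg, Fm.map_eq_self hg_fix hθ] using h.derivesIn_map hgP'
  · simpa only [hΘg, Fm.map_eq_self hg_fix hθ] using h.indDerivesIn_map hgP'
  · exact ⟨i, g p, hgP' p, hΘg ▸ h.derivesIn_map hgP'⟩
  · exact ⟨i, g p, hgP' p, hΘg ▸ h.indDerivesIn_map hgP'⟩
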